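/- lim_{q→∞} (1/(q+1)) · Σ_{k=1}^q [Φ^{-1}(k/(q+1))]² = 1; that is, ‖ă^q‖² ∼ q+1 as q → ∞, where ă^q is the normal configuration. -/

import Mathlib

open MeasureTheory Filter

/-- The standard normal cumulative distribution function. -/
noncomputable def Phi (x : ℝ) : ℝ :=
  ∫ t in Set.Iic x, Real.exp (-t ^ 2 / 2) / Real.sqrt (2 * Real.pi)

/-- The standard normal quantile function `Φ⁻¹`. -/
noncomputable def PhiInv : ℝ → ℝ := Function.invFun Phi

namespace Stmt14Aux

open Set

noncomputable def gau (t : ℝ) : ℝ := Real.exp (-t ^ 2 / 2) / Real.sqrt (2 * Real.pi)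

lemma Phi_eq (x : ℝ) : Phi x = ∫ t in Set.Iic x, gau t := rfl

lemma gau_pos (t : ℝ) : 0 < gau t :=
  div_pos (Real.exp_pos _) (Real.sqrt_pos.2 (by positivity))

lemma continuous_gau : Continuous gau := by
  unfold gau
  fun_prop

lemma integrable_gau : Integrable gau := by
  have h := (integrable_exp_neg_mul_sq (b := 1/2) (by norm_num)).div_const (Real.sqrt (2*Real.pi))
  convert h using 2 with t
  unfold gau
  ring_nf

lemma integral_gau : ∫ t, gau t = 1 := by
  have h := integral_gaussian (1/2)
  have h2 : ∫ t, gau t = (∫ t : ℝ, Real.exp (-(1/2) * t ^ 2)) / Real.sqrt (2*Real.pi) := by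
    rw [← integral_div]
    congr 1 with t
    unfold gau; ring_nf
  rw [h2, h]
  rw [show Real.pi / (1/2) = 2 * Real.pi by ring]
  rw [div_self (by positivity)]

lemma Phi_sub (a b : ℝ) : Phi b - Phi a = ∫ t in a..b, gau t := by
  rw [Phi_eq, Phi_eq]
  exact intervalIntegral.integral_Iic_sub_Iic (f := gau) (μ := volume)
    integrable_gau.integrableOn integrable_gau.integrableOn

lemma hasDerivAt_Phi (x : ℝ) : HasDerivAt Phi (gau x) x := by
  have key : HasDerivAt (fun u => ∫ t in (0:ℝ)..u, gau t) (gau x) x :=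
    intervalIntegral.integral_hasDerivAt_right (integrable_gau.intervalIntegrable)
      (continuous_gau.stronglyMeasurableAtFilter _ _) continuous_gau.continuousAt
  have : Phi = fun u => Phi 0 + ∫ t in (0:ℝ)..u, gau t := by
    funext u; rw [← Phi_sub]; ring
  rw [this]
  simpa using key.const_add (Phi 0)

lemma continuous_Phi : Continuous Phi := by
  have : Differentiable ℝ Phi := fun x => (hasDerivAt_Phi x).differentiableAt
  exact this.continuous

lemma strictMono_Phi : StrictMono Phi := by
  apply strictMono_of_deriv_pos
  intro x
  rw [(hasDerivAt_Phi x).deriv]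
  exact gau_pos x

lemma Phi_pos (x : ℝ) : 0 < Phi x := by
  rw [Phi_eq]
  apply (setIntegral_pos_iff_support_of_nonneg_ae ?_ integrable_gau.integrableOn).2
  · have : Function.support gau = univ := by
      ext t; simp [Function.mem_support, (gau_pos t).ne']
    rw [this, univ_inter]
    simp [Real.volume_Iic]
  · exact Eventually.of_forall fun t => (gau_pos t).le

lemma Phi_add_Ioi (x : ℝ) : Phi x + ∫ t in Ioi x, gau t = 1 := by
  rw [Phi_eq, ← integral_gau]
  rw [← integral_add_compl (measurableSet_Iic (a := x)) integrable_gau, compl_Iic]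

lemma Phi_lt_one (x : ℝ) : Phi x < 1 := by
  have h := Phi_add_Ioi x
  have hp : 0 < ∫ t in Ioi x, gau t := by
    apply (setIntegral_pos_iff_support_of_nonneg_ae ?_ integrable_gau.integrableOn).2
    · have : Function.support gau = univ := by
        ext t; simp [Function.mem_support, (gau_pos t).ne']
      rw [this, univ_inter]
      simp [Real.volume_Ioi]
    · exact Eventually.of_forall fun t => (gau_pos t).le
  linarith

lemma tendsto_Phi_atBot : Tendsto Phi atBot (nhds 0) := by
  have h := intervalIntegral_tendsto_integral_Iic (0:ℝ) (integrable_gau.integrableOn) tendsto_id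
  have h2 : Tendsto (fun i : ℝ => Phi 0 - Phi i) atBot (nhds (Phi 0)) := by
    simpa [← Phi_sub, Phi_eq] using h
  have := (tendsto_const_nhds (x := Phi 0) (f := atBot)).sub h2
  simpa using this

lemma tendsto_Phi_atTop : Tendsto Phi atTop (nhds 1) := by
  have h := intervalIntegral_tendsto_integral_Ioi (0:ℝ) (integrable_gau.integrableOn) tendsto_id
  have h2 : Tendsto (fun i : ℝ => Phi i - Phi 0) atTop (nhds (∫ t in Ioi (0:ℝ), gau t)) := by
    simpa [← Phi_sub] using h
  have := h2.add (tendsto_const_nhds (x := Phi 0) (f := atTop))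
  have e : (∫ t in Ioi (0:ℝ), gau t) + Phi 0 = 1 := by
    have := Phi_add_Ioi 0; linarith
  rw [e] at this
  simpa using this

lemma Phi_surjOn {u : ℝ} (hu : u ∈ Ioo (0:ℝ) 1) : ∃ x, Phi x = u := by
  obtain ⟨a, ha⟩ := (tendsto_Phi_atBot.eventually (eventually_lt_nhds hu.1)).exists
  obtain ⟨b, hb⟩ := (tendsto_Phi_atTop.eventually (eventually_gt_nhds hu.2)).exists
  have hm : u ∈ Icc (Phi a) (Phi b) := ⟨ha.le, hb.le⟩
  exact intermediate_value_univ a b continuous_Phi hm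



lemma Phi_PhiInv {u : ℝ} (hu : u ∈ Ioo (0:ℝ) 1) : Phi (PhiInv u) = u :=
  Function.invFun_eq (Phi_surjOn hu)

lemma gau_even (t : ℝ) : gau (-t) = gau t := by unfold gau; rw [neg_pow]; ring_nf

lemma Phi_zero : Phi 0 = 1/2 := by
  have h1 : Phi 0 = ∫ t in Ioi (0:ℝ), gau t := by
    rw [Phi_eq]
    calc (∫ t in Iic (0:ℝ), gau t) = ∫ t in Iic (0:ℝ), gau (-t) := by
          simp [gau_even]
      _ = ∫ t in Ioi (0:ℝ), gau t := by
          simpa using integral_comp_neg_Iic (0:ℝ) gau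
  have h2 := Phi_add_Ioi 0
  rw [← h1] at h2; linarith

noncomputable def G (t : ℝ) : ℝ := t ^ 2 * gau t

lemma G_nonneg (t : ℝ) : 0 ≤ G t := mul_nonneg (sq_nonneg t) (gau_pos t).le

lemma continuous_G : Continuous G := (continuous_pow 2).mul continuous_gau

lemma integrable_G : Integrable G := by
  have h := (integrable_rpow_mul_exp_neg_mul_sq (b := 1/2) (by norm_num) (s := 2)
    (by norm_num)).div_const (Real.sqrt (2*Real.pi))
  apply h.congr (Eventually.of_forall fun t => ?_)
  unfold G gau
  simp only [show ((2:ℝ)) = ((2:ℕ):ℝ) from by norm_num, Real.rpow_natCast]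
  push_cast
  ring_nf

lemma hasDerivAt_gau (x : ℝ) : HasDerivAt gau (-x * gau x) x := by
  have h1 : HasDerivAt (fun t : ℝ => -t^2/2) (-x) x := by
    have := ((hasDerivAt_pow 2 x).div_const 2).neg
    simpa [neg_div, Pi.neg_def] using this
  have h2 := h1.exp
  have h3 := h2.div_const (Real.sqrt (2*Real.pi))
  refine h3.congr_deriv ?_
  unfold gau; ring

lemma integral_G : ∫ t, G t = 1 := by
  have hF : ∀ x, HasDerivAt (fun y => Phi y - y * gau y) (G x) x := by
    intro x
    have h1 := (hasDerivAt_Phi x).sub ((hasDerivAt_id x).mul (hasDerivAt_gau x))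
    refine h1.congr_deriv ?_
    unfold G; simp only [id_eq]; ring
  have hxg : Tendsto (fun x : ℝ => x * gau x) (cocompact ℝ) (nhds 0) := by
    have h := (tendsto_rpow_abs_mul_exp_neg_mul_sq_cocompact (a := 1/2) (by norm_num) 1).div_const
      (Real.sqrt (2*Real.pi))
    rw [zero_div] at h
    apply squeeze_zero_norm _ h
    intro x
    have : |x * gau x| = |x| ^ (1:ℝ) * Real.exp (-(1/2) * x ^ 2) / Real.sqrt (2*Real.pi) := by
      rw [Real.rpow_one]
      unfold gau
      rw [abs_mul, abs_div, abs_of_nonneg (Real.exp_pos _).le,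
        abs_of_nonneg (Real.sqrt_nonneg _)]
      ring_nf
    rw [Real.norm_eq_abs, this]
  have hbot : Tendsto (fun y : ℝ => Phi y - y * gau y) atBot (nhds 0) := by
    have := tendsto_Phi_atBot.sub (hxg.mono_left ?_)
    · simpa using this
    · rw [cocompact_eq_atBot_atTop]; exact le_sup_left
  have htop : Tendsto (fun y : ℝ => Phi y - y * gau y) atTop (nhds 1) := by
    have := tendsto_Phi_atTop.sub (hxg.mono_left ?_)
    · simpa using this
    · rw [cocompact_eq_atBot_atTop]; exact le_sup_right
  have := MeasureTheory.integral_of_hasDerivAt_of_tendsto hF integrable_G hbot htop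
  rw [this]; ring


lemma PhiInv_Phi (x : ℝ) : PhiInv (Phi x) = x :=
  Function.leftInverse_invFun strictMono_Phi.injective x

noncomputable def Psi (a : ℝ) : ℝ := ∫ t in Iic a, G t

lemma Psi_mono {a b : ℝ} (hab : a ≤ b) : Psi a ≤ Psi b :=
  setIntegral_mono_set integrable_G.integrableOn (Eventually.of_forall G_nonneg)
    (HasSubset.Subset.eventuallyLE (Iic_subset_Iic.2 hab))

lemma intervalG (a b : ℝ) : ∫ t in a..b, G t = Psi b - Psi a := by
  unfold Psi
  exact (intervalIntegral.integral_Iic_sub_Iic (f := G) (μ := volume)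
    integrable_G.integrableOn integrable_G.integrableOn).symm

lemma Psi_add_Ioi (a : ℝ) : Psi a + ∫ t in Ioi a, G t = 1 := by
  rw [Psi, ← integral_G]
  rw [← integral_add_compl (measurableSet_Iic (a := a)) integrable_G, compl_Iic]

lemma tail_left {b : ℝ} (hb : b ≤ 0) : b^2 * Phi b ≤ Psi b := by
  rw [Phi_eq, ← integral_const_mul]
  apply setIntegral_mono_on (integrable_gau.integrableOn.const_mul _)
    integrable_G.integrableOn measurableSet_Iic
  intro t ht
  have h2 : b^2 ≤ t^2 := by nlinarith [mem_Iic.1 ht]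
  exact mul_le_mul_of_nonneg_right h2 (gau_pos t).le

lemma tail_right {a : ℝ} (ha : 0 ≤ a) : a^2 * (1 - Phi a) ≤ ∫ t in Ioi a, G t := by
  have h1 : 1 - Phi a = ∫ t in Ioi a, gau t := by have := Phi_add_Ioi a; linarith
  rw [h1, ← integral_const_mul]
  apply setIntegral_mono_on (integrable_gau.integrableOn.const_mul _)
    integrable_G.integrableOn measurableSet_Ioi
  intro t ht
  have h2 : a^2 ≤ t^2 := by nlinarith [mem_Ioi.1 ht]
  exact mul_le_mul_of_nonneg_right h2 (gau_pos t).le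

lemma bound_neg_upper {a b : ℝ} (hab : a ≤ b) (hb : b ≤ 0) :
    b^2 * (Phi b - Phi a) ≤ ∫ t in a..b, G t := by
  rw [Phi_sub, ← intervalIntegral.integral_const_mul]
  apply intervalIntegral.integral_mono_on hab
    ((integrable_gau.const_mul _).intervalIntegrable) integrable_G.intervalIntegrable
  intro t ht
  have h2 : b^2 ≤ t^2 := by nlinarith [ht.1, ht.2]
  exact mul_le_mul_of_nonneg_right h2 (gau_pos t).le

lemma bound_neg_lower {a b : ℝ} (hab : a ≤ b) (hb : b ≤ 0) :
    ∫ t in a..b, G t ≤ a^2 * (Phi b - Phi a) := by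
  rw [Phi_sub, ← intervalIntegral.integral_const_mul]
  apply intervalIntegral.integral_mono_on hab
    integrable_G.intervalIntegrable ((integrable_gau.const_mul _).intervalIntegrable)
  intro t ht
  have h2 : t^2 ≤ a^2 := by nlinarith [ht.1, ht.2]
  exact mul_le_mul_of_nonneg_right h2 (gau_pos t).le

lemma bound_pos_upper {a b : ℝ} (hab : a ≤ b) (ha : 0 ≤ a) :
    a^2 * (Phi b - Phi a) ≤ ∫ t in a..b, G t := by
  rw [Phi_sub, ← intervalIntegral.integral_const_mul]
  apply intervalIntegral.integral_mono_on hab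
    ((integrable_gau.const_mul _).intervalIntegrable) integrable_G.intervalIntegrable
  intro t ht
  have h2 : a^2 ≤ t^2 := by nlinarith [ht.1, ht.2]
  exact mul_le_mul_of_nonneg_right h2 (gau_pos t).le

lemma bound_pos_lower {a b : ℝ} (hab : a ≤ b) (ha : 0 ≤ a) :
    ∫ t in a..b, G t ≤ b^2 * (Phi b - Phi a) := by
  rw [Phi_sub, ← intervalIntegral.integral_const_mul]
  apply intervalIntegral.integral_mono_on hab
    integrable_G.intervalIntegrable ((integrable_gau.const_mul _).intervalIntegrable)
  intro t ht
  have h2 : t^2 ≤ b^2 := by nlinarith [ht.1, ht.2]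
  exact mul_le_mul_of_nonneg_right h2 (gau_pos t).le

lemma middle_bound {a b : ℝ} (hab : a ≤ b) (hA : PhiInv (1/4) ≤ a) (hB : b ≤ PhiInv (3/4)) :
    ∫ t in a..b, G t ≤ ((PhiInv (1/4))^2 + (PhiInv (3/4))^2) * (Phi b - Phi a) := by
  set A := PhiInv (1/4) with hA'
  set B := PhiInv (3/4) with hB'
  have hPA : Phi A = 1/4 := Phi_PhiInv (by norm_num)
  have hPB : Phi B = 3/4 := Phi_PhiInv (by norm_num)
  have hA0 : A ≤ 0 := by
    have := strictMono_Phi.le_iff_le (a := A) (b := 0)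
    rw [hPA, Phi_zero] at this
    exact this.1 (by norm_num)
  have hB0 : 0 ≤ B := by
    have := strictMono_Phi.le_iff_le (a := (0:ℝ)) (b := B)
    rw [hPB, Phi_zero] at this
    exact this.1 (by norm_num)
  rw [Phi_sub, ← intervalIntegral.integral_const_mul]
  apply intervalIntegral.integral_mono_on hab
    integrable_G.intervalIntegrable ((integrable_gau.const_mul _).intervalIntegrable)
  intro t ht
  have h2 : t^2 ≤ A^2 + B^2 := by
    rcases le_or_gt t 0 with h | h
    · nlinarith [ht.1, sq_nonneg B]
    · nlinarith [ht.2, sq_nonneg A]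
  exact mul_le_mul_of_nonneg_right h2 (gau_pos t).le


noncomputable def Xp (q k : ℕ) : ℝ := PhiInv ((k:ℝ) / ((q:ℝ)+1))

noncomputable def Cst : ℝ := (PhiInv (1/4))^2 + (PhiInv (3/4))^2

lemma PhiXp {q k : ℕ} (h1 : 1 ≤ k) (h2 : k ≤ q) : Phi (Xp q k) = (k:ℝ)/((q:ℝ)+1) := by
  apply Phi_PhiInv
  constructor
  · apply div_pos
    · exact_mod_cast Nat.pos_of_ne_zero (by omega)
    · positivity
  · rw [div_lt_one (by positivity)]
    have : (k:ℝ) ≤ (q:ℝ) := by exact_mod_cast h2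
    linarith

lemma Xp_mono {q j k : ℕ} (hj : 1 ≤ j) (hjk : j ≤ k) (hk : k ≤ q) : Xp q j ≤ Xp q k := by
  rw [← strictMono_Phi.le_iff_le, PhiXp hj (hjk.trans hk), PhiXp (hj.trans hjk) hk]
  have hc : (j:ℝ) ≤ (k:ℝ) := by exact_mod_cast hjk
  gcongr

lemma Xp_nonpos {q k : ℕ} (h1 : 1 ≤ k) (h2 : 2*k ≤ q+1) : Xp q k ≤ 0 := by
  have hk : k ≤ q := by omega
  rw [← strictMono_Phi.le_iff_le, PhiXp h1 hk, Phi_zero, div_le_iff₀ (by positivity)]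
  have : (2*k : ℝ) ≤ (q:ℝ)+1 := by exact_mod_cast h2
  linarith

lemma Xp_nonneg {q k : ℕ} (h2 : q+1 ≤ 2*k) (h3 : k ≤ q) : 0 ≤ Xp q k := by
  have h1 : 1 ≤ k := by omega
  rw [← strictMono_Phi.le_iff_le, PhiXp h1 h3, Phi_zero, le_div_iff₀ (by positivity)]
  have : ((q:ℝ)+1) ≤ 2*k := by exact_mod_cast h2
  linarith

lemma Phi_diff {q j k : ℕ} (hj : 1 ≤ j) (hjk : j ≤ k) (hk : k ≤ q) :
    Phi (Xp q k) - Phi (Xp q j) = ((k:ℝ) - (j:ℝ))/((q:ℝ)+1) := by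
  rw [PhiXp (hj.trans hjk) hk, PhiXp hj (hjk.trans hk), div_sub_div_same]


lemma sum_upper {q : ℕ} (hq : 3 ≤ q) :
    (∑ k ∈ Finset.Icc 1 q, (PhiInv ((k : ℝ) / ((q : ℝ) + 1))) ^ 2) / ((q : ℝ) + 1) ≤ 1 := by
  set m := (q+1)/2 with hm
  have hhpos : (0:ℝ) < (q:ℝ)+1 := by positivity
  set T : ℕ → ℝ := fun k => (Xp q k)^2 * (1/((q:ℝ)+1)) with hT
  have hTk : ∀ k, T k = (Xp q k)^2 * (1/((q:ℝ)+1)) := fun k => rfl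
  have hrw : (∑ k ∈ Finset.Icc 1 q, (PhiInv ((k : ℝ) / ((q : ℝ) + 1))) ^ 2) / ((q : ℝ) + 1)
      = ∑ k ∈ Finset.Icc 1 q, T k := by
    rw [Finset.sum_div]
    refine Finset.sum_congr rfl fun k _ => ?_
    rw [hTk k, div_eq_mul_one_div]
    rfl
  rw [hrw]
  have hsplit : ∑ k ∈ Finset.Icc 1 q, T k
      = (∑ k ∈ Finset.Icc 1 m, T k) + ∑ k ∈ Finset.Icc (m+1) q, T k := by
    have e1 : Finset.Icc 1 q = Finset.Ioc 0 q := by ext x; simp; omega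
    have e2 : Finset.Icc 1 m = Finset.Ioc 0 m := by ext x; simp; omega
    have e3 : Finset.Icc (m+1) q = Finset.Ioc m q := by ext x; simp
    rw [e1, e2, e3]
    exact (Finset.sum_Ioc_consecutive _ (by omega) (by omega)).symm
  rw [hsplit]
  set a : ℕ → ℝ := fun i => Xp q (i+1) with ha
  set b : ℕ → ℝ := fun i => Xp q (m+1+i) with hb
  have hleft : ∑ k ∈ Finset.Icc 1 m, T k ≤ Psi (Xp q m) := by
    have e1 : Finset.Icc 1 m = Finset.Ico 1 (m+1) := by ext x; simp
    rw [e1, Finset.sum_Ico_eq_sum_range,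
      show m + 1 - 1 = (m-1) + 1 from by omega, Finset.sum_range_succ']
    have hfirst : T (1 + 0) ≤ Psi (a 0) := by
      have h0 : Xp q 1 ≤ 0 := Xp_nonpos le_rfl (by omega)
      have h2 := tail_left h0
      rw [PhiXp le_rfl (by omega)] at h2
      rw [hTk]
      norm_num at h2 ⊢
      exact h2
    have hterms : ∀ i ∈ Finset.range (m-1),
        T (1 + (i+1)) ≤ ∫ t in a i..a (i+1), G t := by
      intro i hi
      have hi' : i < m - 1 := Finset.mem_range.1 hi
      have hmono : Xp q (i+1) ≤ Xp q (i+1+1) := Xp_mono (by omega) (by omega) (by omega)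
      have hneg : Xp q (i+1+1) ≤ 0 := Xp_nonpos (by omega) (by omega)
      have hbnd := bound_neg_upper hmono hneg
      rw [Phi_diff (by omega) (by omega) (by omega)] at hbnd
      rw [show ((i+1+1:ℕ):ℝ) - ((i+1:ℕ):ℝ) = 1 from by push_cast; ring] at hbnd
      rw [hTk, show 1 + (i+1) = i+1+1 from by omega]
      exact hbnd
    have htel := intervalIntegral.sum_integral_adjacent_intervals (a := a) (f := G)
      (μ := volume) (n := m-1) (fun i _ => integrable_G.intervalIntegrable)
    have ha0 : a 0 = Xp q 1 := rfl
    have ham : a (m-1) = Xp q m := by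
      show Xp q ((m-1)+1) = Xp q m
      rw [show (m-1)+1 = m from by omega]
    calc (∑ i ∈ Finset.range (m-1), T (1 + (i+1))) + T (1+0)
        ≤ (∑ i ∈ Finset.range (m-1), ∫ t in a i..a (i+1), G t) + Psi (a 0) :=
          add_le_add (Finset.sum_le_sum hterms) hfirst
      _ = (∫ t in (a 0)..(a (m-1)), G t) + Psi (a 0) := by rw [htel]
      _ = Psi (Xp q m) := by rw [intervalG, ha0, ham]; ring
  have hright : ∑ k ∈ Finset.Icc (m+1) q, T k ≤ 1 - Psi (Xp q (m+1)) := by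
    have e1 : Finset.Icc (m+1) q = Finset.Ico (m+1) (q+1) := by ext x; simp
    rw [e1, Finset.sum_Ico_eq_sum_range,
      show q + 1 - (m+1) = (q-m-1) + 1 from by omega, Finset.sum_range_succ]
    have hlast : T (m+1+(q-m-1)) ≤ 1 - Psi (Xp q q) := by
      rw [show m+1+(q-m-1) = q from by omega]
      have h0 : 0 ≤ Xp q q := Xp_nonneg (by omega) le_rfl
      have h2 := tail_right h0
      rw [PhiXp (by omega) le_rfl] at h2
      have hP := Psi_add_Ioi (Xp q q)
      have e : T q = (Xp q q)^2 * (1 - (q:ℝ)/((q:ℝ)+1)) := by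
        rw [hTk]
        have e2 : 1 - (q:ℝ)/((q:ℝ)+1) = 1/((q:ℝ)+1) := by field_simp; ring
        rw [e2]
      rw [e]; linarith
    have hterms : ∀ i ∈ Finset.range (q-m-1),
        T (m+1+i) ≤ ∫ t in b i..b (i+1), G t := by
      intro i hi
      have hi' : i < q-m-1 := Finset.mem_range.1 hi
      have hmono : Xp q (m+1+i) ≤ Xp q (m+1+(i+1)) := Xp_mono (by omega) (by omega) (by omega)
      have hpos : 0 ≤ Xp q (m+1+i) := Xp_nonneg (by omega) (by omega)
      have hbnd := bound_pos_upper hmono hpos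
      rw [Phi_diff (by omega) (by omega) (by omega)] at hbnd
      rw [show ((m+1+(i+1):ℕ):ℝ) - ((m+1+i:ℕ):ℝ) = 1 from by push_cast; ring] at hbnd
      rw [hTk]
      exact hbnd
    have htel := intervalIntegral.sum_integral_adjacent_intervals (a := b) (f := G)
      (μ := volume) (n := q-m-1) (fun i _ => integrable_G.intervalIntegrable)
    have hb0 : b 0 = Xp q (m+1) := by
      show Xp q (m+1+0) = Xp q (m+1)
      norm_num
    have hbq : b (q-m-1) = Xp q q := by
      show Xp q (m+1+(q-m-1)) = Xp q q
      rw [show m+1+(q-m-1) = q from by omega]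
    calc (∑ i ∈ Finset.range (q-m-1), T (m+1+i)) + T (m+1+(q-m-1))
        ≤ (∑ i ∈ Finset.range (q-m-1), ∫ t in b i..b (i+1), G t) + (1 - Psi (Xp q q)) :=
          add_le_add (Finset.sum_le_sum hterms) hlast
      _ = (∫ t in (b 0)..(b (q-m-1)), G t) + (1 - Psi (Xp q q)) := by rw [htel]
      _ = 1 - Psi (Xp q (m+1)) := by rw [intervalG, hb0, hbq]; ring
  have hPsi : Psi (Xp q m) ≤ Psi (Xp q (m+1)) :=
    Psi_mono (Xp_mono (by omega) (by omega) (by omega))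
  linarith

lemma sum_lower {q : ℕ} (hq : 3 ≤ q) :
    (∫ t in (Xp q 1)..(Xp q q), G t) - Cst / ((q:ℝ)+1)
      ≤ (∑ k ∈ Finset.Icc 1 q, (PhiInv ((k : ℝ) / ((q : ℝ) + 1))) ^ 2) / ((q : ℝ) + 1) := by
  set m := (q+1)/2 with hm
  have hhpos : (0:ℝ) < (q:ℝ)+1 := by positivity
  set T : ℕ → ℝ := fun k => (Xp q k)^2 * (1/((q:ℝ)+1)) with hT
  have hTk : ∀ k, T k = (Xp q k)^2 * (1/((q:ℝ)+1)) := fun k => rfl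
  have hrw : (∑ k ∈ Finset.Icc 1 q, (PhiInv ((k : ℝ) / ((q : ℝ) + 1))) ^ 2) / ((q : ℝ) + 1)
      = ∑ k ∈ Finset.Icc 1 q, T k := by
    rw [Finset.sum_div]
    refine Finset.sum_congr rfl fun k _ => ?_
    rw [hTk k, div_eq_mul_one_div]
    rfl
  rw [hrw]
  set a : ℕ → ℝ := fun i => Xp q (i+1) with ha
  set b : ℕ → ℝ := fun i => Xp q (m+1+i) with hb
  have hmono_m : Xp q m ≤ Xp q (m+1) := Xp_mono (by omega) (by omega) (by omega)
  have hmid : Psi (Xp q (m+1)) - Psi (Xp q m) ≤ Cst / ((q:ℝ)+1) := by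
    have hA : PhiInv (1/4) ≤ Xp q m := by
      rw [show Xp q m = PhiInv ((m:ℝ)/((q:ℝ)+1)) from rfl,
        ← strictMono_Phi.le_iff_le, Phi_PhiInv (by norm_num),
        Phi_PhiInv ?memb]
      · rw [div_le_div_iff₀ (by norm_num : (0:ℝ) < 4) hhpos]
        have h4 : q + 1 ≤ 4*m := by omega
        have : ((q:ℝ)+1) ≤ 4*(m:ℝ) := by exact_mod_cast h4
        linarith
      · constructor
        · apply div_pos
          · exact_mod_cast Nat.pos_of_ne_zero (by omega)
          · exact hhpos
        · rw [div_lt_one hhpos]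
          have : (m:ℝ) ≤ (q:ℝ) := by exact_mod_cast (by omega : m ≤ q)
          linarith
    have hB : Xp q (m+1) ≤ PhiInv (3/4) := by
      have hm1 : ((m+1:ℕ):ℝ)/((q:ℝ)+1) ∈ Ioo (0:ℝ) 1 := by
        constructor
        · exact div_pos (by exact_mod_cast Nat.succ_pos m) hhpos
        · rw [div_lt_one hhpos]
          have : ((m+1:ℕ):ℝ) ≤ (q:ℝ) := by exact_mod_cast (by omega : m+1 ≤ q)
          linarith
      rw [show Xp q (m+1) = PhiInv (((m+1:ℕ):ℝ)/((q:ℝ)+1)) from rfl,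
        ← strictMono_Phi.le_iff_le, Phi_PhiInv hm1,
        Phi_PhiInv (by norm_num : (3:ℝ)/4 ∈ Ioo (0:ℝ) 1)]
      rw [div_le_div_iff₀ hhpos (by norm_num : (0:ℝ) < 4)]
      have h4 : 4*(m+1) ≤ 3*(q+1) := by omega
      have : 4*((m:ℝ)+1) ≤ 3*((q:ℝ)+1) := by exact_mod_cast h4
      push_cast
      linarith
    have hmb := middle_bound hmono_m hA hB
    rw [Phi_diff (by omega) (by omega) (by omega)] at hmb
    rw [show ((m+1:ℕ):ℝ) - ((m:ℕ):ℝ) = 1 from by push_cast; ring] at hmb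
    rw [intervalG] at hmb
    calc Psi (Xp q (m+1)) - Psi (Xp q m) ≤ Cst * (1/((q:ℝ)+1)) := hmb
      _ = Cst/((q:ℝ)+1) := by ring
  have hsplit : (∑ k ∈ Finset.Icc 1 (m-1), T k) + (∑ k ∈ Finset.Icc m (m+1), T k)
      + (∑ k ∈ Finset.Icc (m+2) q, T k) = ∑ k ∈ Finset.Icc 1 q, T k := by
    have e1 : Finset.Icc 1 (m-1) = Finset.Ioc 0 (m-1) := by ext x; simp; omega
    have e2 : Finset.Icc m (m+1) = Finset.Ioc (m-1) (m+1) := by ext x; simp; omega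
    have e3 : Finset.Icc (m+2) q = Finset.Ioc (m+1) q := by ext x; simp; omega
    have e4 : Finset.Icc 1 q = Finset.Ioc 0 q := by ext x; simp; omega
    rw [e1, e2, e3, e4]
    rw [Finset.sum_Ioc_consecutive _ (show 0 ≤ m-1 by omega) (show m-1 ≤ m+1 by omega)]
    exact Finset.sum_Ioc_consecutive _ (by omega) (by omega)
  have hmidsum : 0 ≤ ∑ k ∈ Finset.Icc m (m+1), T k :=
    Finset.sum_nonneg fun k _ => by rw [hTk]; positivity
  have hleft : Psi (Xp q m) - Psi (Xp q 1) ≤ ∑ k ∈ Finset.Icc 1 (m-1), T k := by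
    have e1 : Finset.Icc 1 (m-1) = Finset.Ico 1 m := by ext x; simp; omega
    rw [e1, Finset.sum_Ico_eq_sum_range]
    have hterms : ∀ i ∈ Finset.range (m-1),
        (∫ t in a i..a (i+1), G t) ≤ T (1 + i) := by
      intro i hi
      have hi' : i < m - 1 := Finset.mem_range.1 hi
      have hmono : Xp q (i+1) ≤ Xp q (i+1+1) := Xp_mono (by omega) (by omega) (by omega)
      have hneg : Xp q (i+1+1) ≤ 0 := Xp_nonpos (by omega) (by omega)
      have hbnd := bound_neg_lower hmono hneg
      rw [Phi_diff (by omega) (by omega) (by omega)] at hbnd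
      rw [show ((i+1+1:ℕ):ℝ) - ((i+1:ℕ):ℝ) = 1 from by push_cast; ring] at hbnd
      rw [hTk, show 1 + i = i+1 from by omega]
      exact hbnd
    have htel := intervalIntegral.sum_integral_adjacent_intervals (a := a) (f := G)
      (μ := volume) (n := m-1) (fun i _ => integrable_G.intervalIntegrable)
    have ha0 : a 0 = Xp q 1 := rfl
    have ham : a (m-1) = Xp q m := by
      show Xp q ((m-1)+1) = Xp q m
      rw [show (m-1)+1 = m from by omega]
    calc Psi (Xp q m) - Psi (Xp q 1) = ∫ t in (a 0)..(a (m-1)), G t := by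
          rw [intervalG, ha0, ham]
      _ = ∑ i ∈ Finset.range (m-1), ∫ t in a i..a (i+1), G t := htel.symm
      _ ≤ ∑ i ∈ Finset.range (m-1), T (1 + i) := Finset.sum_le_sum hterms
  have hright : Psi (Xp q q) - Psi (Xp q (m+1)) ≤ ∑ k ∈ Finset.Icc (m+2) q, T k := by
    have e1 : Finset.Icc (m+2) q = Finset.Ico (m+2) (q+1) := by ext x; simp
    rw [e1, Finset.sum_Ico_eq_sum_range,
      show q + 1 - (m+2) = q-m-1 from by omega]
    have hterms : ∀ i ∈ Finset.range (q-m-1),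
        (∫ t in b i..b (i+1), G t) ≤ T (m+2+i) := by
      intro i hi
      have hi' : i < q-m-1 := Finset.mem_range.1 hi
      have hmono : Xp q (m+1+i) ≤ Xp q (m+1+(i+1)) := Xp_mono (by omega) (by omega) (by omega)
      have hpos : 0 ≤ Xp q (m+1+i) := Xp_nonneg (by omega) (by omega)
      have hbnd := bound_pos_lower hmono hpos
      rw [Phi_diff (by omega) (by omega) (by omega)] at hbnd
      rw [show ((m+1+(i+1):ℕ):ℝ) - ((m+1+i:ℕ):ℝ) = 1 from by push_cast; ring] at hbnd
      rw [hTk, show m+2+i = m+1+(i+1) from by omega]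
      exact hbnd
    have htel := intervalIntegral.sum_integral_adjacent_intervals (a := b) (f := G)
      (μ := volume) (n := q-m-1) (fun i _ => integrable_G.intervalIntegrable)
    have hb0 : b 0 = Xp q (m+1) := by
      show Xp q (m+1+0) = Xp q (m+1)
      norm_num
    have hbq : b (q-m-1) = Xp q q := by
      show Xp q (m+1+(q-m-1)) = Xp q q
      rw [show m+1+(q-m-1) = q from by omega]
    calc Psi (Xp q q) - Psi (Xp q (m+1)) = ∫ t in (b 0)..(b (q-m-1)), G t := by
          rw [intervalG, hb0, hbq]
      _ = ∑ i ∈ Finset.range (q-m-1), ∫ t in b i..b (i+1), G t := htel.symm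
      _ ≤ ∑ i ∈ Finset.range (q-m-1), T (m+2+i) := Finset.sum_le_sum hterms
  have hint : (∫ t in (Xp q 1)..(Xp q q), G t) = Psi (Xp q q) - Psi (Xp q 1) := intervalG _ _
  linarith


lemma tendsto_inv_q : Tendsto (fun q : ℕ => (1:ℝ)/((q:ℝ)+1)) atTop (nhds 0) := by
  simpa using tendsto_one_div_add_atTop_nhds_zero_nat (𝕜 := ℝ)

lemma tendsto_X1 : Tendsto (fun q : ℕ => Xp q 1) atTop atBot := by
  rw [tendsto_atBot]
  intro M
  have hPM : 0 < Phi M := Phi_pos M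
  filter_upwards [tendsto_inv_q.eventually (eventually_lt_nhds hPM),
    eventually_ge_atTop 1] with q hq hq1
  have hhpos : (0:ℝ) < (q:ℝ)+1 := by positivity
  have hmem : ((1:ℕ):ℝ)/((q:ℝ)+1) ∈ Ioo (0:ℝ) 1 := by
    rw [Nat.cast_one]
    constructor
    · positivity
    · rw [div_lt_one hhpos]
      have : (1:ℝ) ≤ (q:ℝ) := by exact_mod_cast hq1
      linarith
  have hlt : Phi (Xp q 1) < Phi M := by
    rw [show Xp q 1 = PhiInv (((1:ℕ):ℝ)/((q:ℝ)+1)) from rfl, Phi_PhiInv hmem, Nat.cast_one]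
    exact hq
  exact (strictMono_Phi.lt_iff_lt.1 hlt).le

lemma tendsto_Xq : Tendsto (fun q : ℕ => Xp q q) atTop atTop := by
  rw [tendsto_atTop]
  intro M
  have hPM : Phi M < 1 := Phi_lt_one M
  have h2 : Tendsto (fun q : ℕ => (q:ℝ)/((q:ℝ)+1)) atTop (nhds 1) := by
    have := tendsto_const_nhds (x := (1:ℝ)) (f := atTop (α := ℕ)) |>.sub tendsto_inv_q
    rw [sub_zero] at this
    apply this.congr
    intro q
    have hhpos : (0:ℝ) < (q:ℝ)+1 := by positivity
    field_simp; ring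
  filter_upwards [h2.eventually (eventually_gt_nhds hPM),
    eventually_ge_atTop 1] with q hq hq1
  have hhpos : (0:ℝ) < (q:ℝ)+1 := by positivity
  have hmem : ((q:ℕ):ℝ)/((q:ℝ)+1) ∈ Ioo (0:ℝ) 1 := by
    constructor
    · apply div_pos _ hhpos
      exact_mod_cast Nat.pos_of_ne_zero (by omega)
    · rw [div_lt_one hhpos]
      linarith
  have hlt : Phi M < Phi (Xp q q) := by
    rw [show Xp q q = PhiInv (((q:ℕ):ℝ)/((q:ℝ)+1)) from rfl, Phi_PhiInv hmem]
    exact hq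
  exact (strictMono_Phi.lt_iff_lt.1 hlt).le

lemma lo_tendsto :
    Tendsto (fun q : ℕ => (∫ t in (Xp q 1)..(Xp q q), G t) - Cst/((q:ℝ)+1)) atTop (nhds 1) := by
  have h1 := intervalIntegral_tendsto_integral integrable_G tendsto_X1 tendsto_Xq
  rw [integral_G] at h1
  have h2 : Tendsto (fun q : ℕ => Cst/((q:ℝ)+1)) atTop (nhds 0) := by
    apply Tendsto.div_atTop (tendsto_const_nhds (x := Cst))
    apply tendsto_atTop_add_const_right
    exact tendsto_natCast_atTop_atTop
  simpa using h1.sub h2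

lemma main1 :
    Tendsto
      (fun q : ℕ => (∑ k ∈ Finset.Icc 1 q, (PhiInv ((k : ℝ) / ((q : ℝ) + 1))) ^ 2) / ((q : ℝ) + 1))
      atTop (nhds 1) := by
  apply tendsto_of_tendsto_of_tendsto_of_le_of_le' lo_tendsto tendsto_const_nhds
  · filter_upwards [eventually_ge_atTop 3] with q hq
    exact sum_lower hq
  · filter_upwards [eventually_ge_atTop 3] with q hq
    exact sum_upper hq

end Stmt14Aux

/-- The normal configuration `ă^q ∈ ℝ^q`, with coordinates `Φ⁻¹(k/(q+1))`, `k = 1,…,q`. -/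
noncomputable def abreve (q : ℕ) : EuclideanSpace ℝ (Fin q) := WithLp.toLp 2 fun i =>
  PhiInv (((i : ℕ) + 1 : ℝ) / ((q : ℝ) + 1))

/-- Equation (92): `(1/(q+1)) Σ_{k=1}^q [Φ⁻¹(k/(q+1))]² → 1`, i.e. `‖ă^q‖² ∼ q+1`. -/
theorem stmt14 :
    Tendsto
      (fun q : ℕ => (∑ k ∈ Finset.Icc 1 q, (PhiInv ((k : ℝ) / ((q : ℝ) + 1))) ^ 2) / ((q : ℝ) + 1))
      atTop (nhds 1) ∧
    Tendsto (fun q : ℕ => ‖abreve q‖ ^ 2 / ((q : ℝ) + 1)) atTop (nhds 1) := by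
  refine ⟨Stmt14Aux.main1, ?_⟩
  have he : ∀ q : ℕ, ‖abreve q‖ ^ 2
      = ∑ k ∈ Finset.Icc 1 q, (PhiInv ((k : ℝ) / ((q : ℝ) + 1))) ^ 2 := by
    intro q
    rw [EuclideanSpace.norm_eq, Real.sq_sqrt (by positivity)]
    have e0 : ∀ i : Fin q, ‖abreve q i‖ ^ 2
        = (fun j : ℕ => (PhiInv (((j:ℝ) + 1) / ((q : ℝ) + 1))) ^ 2) (i : ℕ) := by
      intro i
      simp only [abreve, PiLp.toLp_apply, Real.norm_eq_abs, sq_abs]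
    calc (∑ i : Fin q, ‖abreve q i‖ ^ 2)
        = ∑ i : Fin q, (fun j : ℕ => (PhiInv (((j:ℝ) + 1) / ((q : ℝ) + 1))) ^ 2) (i : ℕ) :=
          Finset.sum_congr rfl fun i _ => e0 i
      _ = ∑ j ∈ Finset.range q, (PhiInv (((j:ℝ) + 1) / ((q : ℝ) + 1))) ^ 2 :=
          by exact Fin.sum_univ_eq_sum_range (fun j => (PhiInv (((j:ℝ) + 1) / ((q : ℝ) + 1))) ^ 2) q
      _ = ∑ k ∈ Finset.Icc 1 q, (PhiInv ((k : ℝ) / ((q : ℝ) + 1))) ^ 2 := by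
          rw [show Finset.Icc 1 q = Finset.Ico 1 (q+1) from by ext x; simp,
            Finset.sum_Ico_eq_sum_range, show q + 1 - 1 = q from by omega]
          refine Finset.sum_congr rfl fun j _ => ?_
          have : ((1 + j : ℕ) : ℝ) = (j:ℝ) + 1 := by push_cast; ring
          rw [this]
  simp only [he]
  exact Stmt14Aux.main1
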